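/- If I' ⊑ I and h is a negation-free conjunction of network atoms, then QUAL(v, g_edge, g_node, h, I'(t)) ⊆ QUAL(v, g_edge, g_node, h, I(t)), provided I and I' agree on non-fluent atoms; hence |QUAL| is monotone under the ⊑-ordering. -/

import Mathlib

/-- Network formulas over labels `L`. -/
inductive Formula (L : Type) where
  | atom : L → Set ℝ → Formula L
  | and : Formula L → Formula L → Formula L
  | or : Formula L → Formula L → Formula L
  | not : Formula L → Formula L

/-- Satisfaction of a formula by a world (assignment of bounds to labels). -/
def Sat {L : Type} (W : L → Set ℝ) : Formula L → Prop
  | .atom l bnd =>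
      bnd = Set.Icc 0 1 ∨ (bnd ≠ ∅ ∧ bnd ≠ Set.Icc 0 1 ∧ W l ⊆ bnd)
  | .and f g => Sat W f ∧ Sat W g
  | .or f g => Sat W f ∨ Sat W g
  | .not f => ¬ Sat W f

/-- Negation-free formulas. -/
def NegFree {L : Type} : Formula L → Prop
  | .atom _ _ => True
  | .and f g => NegFree f ∧ NegFree g
  | .or f g => NegFree f ∧ NegFree g
  | .not _ => False

/-- Formulas built only from non-fluent atoms. -/
def NonFluentFormula {L : Type} (fluent : L → Prop) : Formula L → Prop
  | .atom l _ => ¬ fluent l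
  | .and f g => NonFluentFormula fluent f ∧ NonFluentFormula fluent g
  | .or f g => NonFluentFormula fluent f ∧ NonFluentFormula fluent g
  | .not f => NonFluentFormula fluent f

/-- Components: nodes and directed edges. -/
def Comp (V : Type) := V ⊕ (V × V)

/-- Network interpretations and interpretations. -/
def NetI (V L : Type) := Comp V → L → Set ℝ
def Interp (V L : Type) := ℕ → NetI V L

/-- `I' ⊑ I`: every bound in `I` is a subset of the corresponding bound in `I'`. -/
def ile {V L : Type} (I' I : Interp V L) : Prop :=
  ∀ t c lab, I t c lab ⊆ I' t c lab

/-- Eligible neighbors of `v` w.r.t. criteria `(gE, gN)` under `NI`. -/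
def ELIG {V L : Type} (E : V → V → Prop) (NI : NetI V L) (v : V)
    (gE gN : Formula L) : Set V :=
  {v' | E v' v ∧ Sat (NI (Sum.inl v')) gN ∧ Sat (NI (Sum.inr (v', v))) gE}

/-- Qualifying neighbors: eligible neighbors additionally satisfying `h`. -/
def QUAL {V L : Type} (E : V → V → Prop) (NI : NetI V L) (v : V)
    (gE gN h : Formula L) : Set V :=
  {v' ∈ ELIG E NI v gE gN | Sat (NI (Sum.inl v')) h}

/-! Eligibility only consults non-fluent atoms, on which `I` and `I'` agree, so it is the same
under both; a negation-free formula only demands that bounds lie inside given sets, which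
survives tightening the bounds. -/

section Sat

variable {L : Type} {W W' : L → Set ℝ} {f : Formula L}

theorem sat_congr_of_nonFluentFormula {fluent : L → Prop}
    (hag : ∀ l, ¬ fluent l → W l = W' l) (hf : NonFluentFormula fluent f) :
    Sat W f ↔ Sat W' f := by
  induction f with
  | atom l bnd => simp only [Sat, hag l hf]
  | and f g ihf ihg => exact and_congr (ihf hf.1) (ihg hf.2)
  | or f g ihf ihg => exact or_congr (ihf hf.1) (ihg hf.2)
  | not f ih => exact not_congr (ih hf)

theorem sat_of_subset_of_negFree (hsub : ∀ l, W l ⊆ W' l) (hf : NegFree f) :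
    Sat W' f → Sat W f := by
  induction f with
  | atom l bnd => exact Or.imp_right fun ⟨hne, hfull, hle⟩ => ⟨hne, hfull, (hsub l).trans hle⟩
  | and f g ihf ihg => exact And.imp (ihf hf.1) (ihg hf.2)
  | or f g ihf ihg => exact Or.imp (ihf hf.1) (ihg hf.2)
  | not f _ => exact hf.elim

end Sat

section Neighbors

variable {V L : Type} {E : V → V → Prop} {fluent : L → Prop} {NI NI' : NetI V L} {v : V}
  {gE gN h : Formula L}

theorem ELIG_congr_of_nonFluentFormula (hag : ∀ c l, ¬ fluent l → NI c l = NI' c l)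
    (hgE : NonFluentFormula fluent gE) (hgN : NonFluentFormula fluent gN) :
    ELIG E NI v gE gN = ELIG E NI' v gE gN := by
  ext v'
  exact and_congr Iff.rfl <| and_congr (sat_congr_of_nonFluentFormula (hag _) hgN)
    (sat_congr_of_nonFluentFormula (hag _) hgE)

theorem QUAL_subset_of_subset (hsub : ∀ c l, NI c l ⊆ NI' c l)
    (hag : ∀ c l, ¬ fluent l → NI c l = NI' c l)
    (hgE : NonFluentFormula fluent gE) (hgN : NonFluentFormula fluent gN) (hh : NegFree h) :
    QUAL E NI' v gE gN h ⊆ QUAL E NI v gE gN h :=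
  fun _ ⟨hel, hsat⟩ =>
    ⟨ELIG_congr_of_nonFluentFormula hag hgE hgN ▸ hel, sat_of_subset_of_negFree (hsub _) hh hsat⟩

end Neighbors

/-- if `I' ⊑ I`, `I` and `I'` agree on non-fluent atoms,
`gE, gN` are non-fluent, and `h` is a negation-free conjunction of atoms,
then `QUAL(v,gE,gN,h,I'(t)) ⊆ QUAL(v,gE,gN,h,I(t))` for all `t, v`. -/
theorem qual_monotone {V L : Type}
    (E : V → V → Prop) (fluent : L → Prop) (I I' : Interp V L)
    (hle : ile I' I)
    (hagree : ∀ t c lab, ¬ fluent lab → I t c lab = I' t c lab)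
    (gE gN h : Formula L)
    (hgE : NonFluentFormula fluent gE) (hgN : NonFluentFormula fluent gN)
    (hh : NegFree h) :
    ∀ (t : ℕ) (v : V),
      QUAL E (I' t) v gE gN h ⊆ QUAL E (I t) v gE gN h :=
  fun t _ => QUAL_subset_of_subset (hle t) (hagree t) hgE hgN hh
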